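/- arXiv:1410.4265 — 3 statements merged into one kernel-verified Lean document; each statement's English description precedes it below -/
import Mathlib

section
/- (Bi-Free Kac/Loeve Theorem, forward direction.) Let (A, φ) be a non-commutative probability space and let (T_1, S_1) and (T_2, S_2) be two-faced pairs in A that are bi-free and satisfy φ(T_k) = 0 = φ(S_k) for k ∈ {1,2}. Fix θ ∈ (0, π/2) and set T_3 = cos(θ)T_1 + sin(θ)T_2, S_3 = cos(θ)S_1 + sin(θ)S_2, T_4 = −sin(θ)T_1 + cos(θ)T_2, S_4 = −sin(θ)S_1 + cos(θ)S_2. If (T_3, S_3) and (T_4, S_4) are bi-free, then (T_1, S_1) and (T_2, S_2) are bi-free central limit distributions and have equal second order (ℓ,r)-cumulants. -/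
open Finset

namespace BiFreeNL

open scoped Classical

/-- `i` and `j` lie in a common block of `P`. -/
def SameBlock {n : ℕ} (P : Finset (Finset (Fin n))) (i j : Fin n) : Prop :=
  ∃ V ∈ P, i ∈ V ∧ j ∈ V

/-- `P` is a partition of `{1, …, n}` (blocks are nonempty, and every point lies in a
unique block). -/
def IsPartition {n : ℕ} (P : Finset (Finset (Fin n))) : Prop :=
  (∀ V ∈ P, V.Nonempty) ∧ ∀ i : Fin n, ∃! V : Finset (Fin n), V ∈ P ∧ i ∈ V

/-- `P` refines `Q` : every block of `P` is contained in a block of `Q`. -/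
def Refines {n : ℕ} (P Q : Finset (Finset (Fin n))) : Prop :=
  ∀ V ∈ P, ∃ W ∈ Q, V ⊆ W

/-- The rank of `i` in the total order `≺_χ`, which reads the left indices
(`χ = true`) in increasing order followed by the right indices (`χ = false`) in
decreasing order.  This is `s_χ⁻¹`. -/
def chiRank {n : ℕ} (χ : Fin n → Bool) (i : Fin n) : ℕ :=
  if χ i = true then ((univ : Finset (Fin n)).filter fun j => χ j = true ∧ j < i).card
  else ((univ : Finset (Fin n)).filter fun j => χ j = true).card
    + ((univ : Finset (Fin n)).filter fun j => χ j = false ∧ i < j).card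

/-- `P` is a bi-non-crossing partition with respect to `χ`, i.e. `s_χ⁻¹ · P` is
non-crossing; equivalently no two distinct blocks cross with respect to `≺_χ`. -/
def IsBiNonCrossing {n : ℕ} (χ : Fin n → Bool) (P : Finset (Finset (Fin n))) : Prop :=
  IsPartition P ∧
    ∀ u₁ v₁ u₂ v₂ : Fin n,
      chiRank χ u₁ < chiRank χ v₁ → chiRank χ v₁ < chiRank χ u₂ →
        chiRank χ u₂ < chiRank χ v₂ →
        SameBlock P u₁ u₂ → SameBlock P v₁ v₂ → SameBlock P u₁ v₁

/-- The (finite) set `BNC(χ)` of bi-non-crossing partitions with respect to `χ`. -/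
noncomputable def BNC {n : ℕ} (χ : Fin n → Bool) : Finset (Finset (Finset (Fin n))) :=
  Finset.univ.filter fun P => IsBiNonCrossing χ P

/-- The maximal element `1_χ` of `BNC(χ)` : the partition with a single block. -/
def onePart (n : ℕ) : Finset (Finset (Fin n)) := {(Finset.univ : Finset (Fin n))}

/-- `μ` is the Möbius function of the lattice `BNC(χ)` : it vanishes off the
refinement order, and satisfies the two defining convolution identities. -/
def IsMoebius {n : ℕ} (χ : Fin n → Bool)
    (μ : Finset (Finset (Fin n)) → Finset (Finset (Fin n)) → ℂ) : Prop :=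
  (∀ P Q, ¬ Refines P Q → μ P Q = 0) ∧
  (∀ P Q, P ∈ BNC χ → Q ∈ BNC χ → Refines P Q →
    (∑ t ∈ (BNC χ).filter fun t => Refines P t ∧ Refines t Q, μ t Q)
      = if P = Q then 1 else 0) ∧
  (∀ P Q, P ∈ BNC χ → Q ∈ BNC χ → Refines P Q →
    (∑ t ∈ (BNC χ).filter fun t => Refines P t ∧ Refines t Q, μ P t)
      = if P = Q then 1 else 0)

/-- A family of Möbius functions, one for each `n` and `χ`. -/
def MoebiusFamily : Type :=
  ∀ n : ℕ, (Fin n → Bool) → Finset (Finset (Fin n)) → Finset (Finset (Fin n)) → ℂ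

variable {A : Type*} [Ring A] [Algebra ℂ A]

/-- `φ_π(Z_1, …, Z_n) = ∏_{V ∈ π} φ(Z_{k_1} ⋯ Z_{k_m})`, the product over the blocks
`V = {k_1 < ⋯ < k_m}` of `π` of the moments along the blocks. -/
noncomputable def phiPart {n : ℕ} (φ : A →ₗ[ℂ] ℂ) (Z : Fin n → A)
    (P : Finset (Finset (Fin n))) : ℂ :=
  ∏ V ∈ P, φ ((V.sort (· ≤ ·)).map Z).prod

/-- The `(ℓ, r)`-cumulant `κ_P(Z_1, …, Z_n) = ∑_{σ ∈ BNC(χ), σ ≤ P} φ_σ(Z) μ(σ, P)`. -/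
noncomputable def cumulant {n : ℕ} (φ : A →ₗ[ℂ] ℂ) (χ : Fin n → Bool)
    (μ : Finset (Finset (Fin n)) → Finset (Finset (Fin n)) → ℂ)
    (P : Finset (Finset (Fin n))) (Z : Fin n → A) : ℂ :=
  ∑ σ ∈ (BNC χ).filter fun σ => Refines σ P, phiPart φ Z σ * μ σ P


/-- The two-faced pairs `(T 0, S 0)` and `(T 1, S 1)` are bi-freely independent with
respect to `φ` : all mixed `(ℓ,r)`-cumulants vanish. -/
def TwoFacedBiFree {A : Type*} [Ring A] [Algebra ℂ A] (φ : A →ₗ[ℂ] ℂ)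
    (μ : MoebiusFamily) (T S : Fin 2 → A) : Prop :=
  ∀ (n : ℕ), 2 ≤ n → ∀ (χ : Fin n → Bool) (ε : Fin n → Fin 2), (∃ i j, ε i ≠ ε j) →
    cumulant φ χ (μ n χ) (onePart n)
      (fun i => if χ i = true then T (ε i) else S (ε i)) = 0

/-- `(T, S)` is a bi-free central limit distribution : all `(ℓ,r)`-cumulants of order
at least three vanish. -/
def IsBiFreeCentralLimit {A : Type*} [Ring A] [Algebra ℂ A] (φ : A →ₗ[ℂ] ℂ)
    (μ : MoebiusFamily) (T S : A) : Prop :=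
  ∀ (n : ℕ), 3 ≤ n → ∀ χ : Fin n → Bool,
    cumulant φ χ (μ n χ) (onePart n) (fun i => if χ i = true then T else S) = 0

/-- `(T 0, S 0)` and `(T 1, S 1)` have equal second order `(ℓ,r)`-cumulants. -/
def EqualSecondOrderCumulants {A : Type*} [Ring A] [Algebra ℂ A] (φ : A →ₗ[ℂ] ℂ)
    (μ : MoebiusFamily) (T S : Fin 2 → A) : Prop :=
  ∀ χ : Fin 2 → Bool,
    cumulant φ χ (μ 2 χ) (onePart 2) (fun i => if χ i = true then T 0 else S 0)
      = cumulant φ χ (μ 2 χ) (onePart 2) (fun i => if χ i = true then T 1 else S 1)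

end BiFreeNL

/-!
Cumulants are multilinear, so the `(ℓ,r)`-cumulant of a word in the rotated pairs
`(T₃, S₃)`, `(T₄, S₄)` expands into cumulants of words in `(T₁, S₁)`, `(T₂, S₂)`; by
bi-freeness of the latter only the two pure words survive. Bi-freeness of the rotated pairs
makes every mixed cumulant vanish, which gives linear relations between the pure cumulants
`κ₁, κ₂` of order `n`. The word with a single letter from `(T₄, S₄)` gives
`cos^{n-2} θ · κ₁ = sin^{n-2} θ · κ₂` (for `n = 2` this is the equality of second order
cumulants), and for `n ≥ 3` the word with two letters from `(T₄, S₄)` gives a second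
relation, forcing `κ₁ = κ₂ = 0`.
-/

open Finset BiFreeNL

theorem List.exists_prod_map_update_eq_mul_mul {α M : Type*} [DecidableEq α] [Monoid M]
    {l : List α} (hl : l.Nodup) {i : α} (hi : i ∈ l) (Z : α → M) :
    ∃ p q : M, ∀ x, (l.map (Function.update Z i x)).prod = p * x * q := by
  obtain ⟨s, t, rfl⟩ := List.append_of_mem hi
  have hs : i ∉ s := fun h => List.disjoint_of_nodup_append hl h List.mem_cons_self
  have ht : i ∉ t := (List.nodup_cons.mp hl.of_append_right).1
  refine ⟨(s.map Z).prod, (t.map Z).prod, fun x => ?_⟩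
  have hs' : s.map (Function.update Z i x) = s.map Z :=
    List.map_congr_left fun a ha => Function.update_of_ne (ne_of_mem_of_not_mem ha hs) _ _
  have ht' : t.map (Function.update Z i x) = t.map Z :=
    List.map_congr_left fun a ha => Function.update_of_ne (ne_of_mem_of_not_mem ha ht) _ _
  simp [hs', ht', mul_assoc]

namespace BiFreeNL

open scoped Classical

variable {A : Type*} [Ring A] [Algebra ℂ A] (φ : A →ₗ[ℂ] ℂ)

theorem IsPartition.of_mem_BNC {n : ℕ} {χ : Fin n → Bool} {P : Finset (Finset (Fin n))}
    (h : P ∈ BNC χ) : IsPartition P :=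
  (mem_filter.mp h).2.1

/-- Only the block containing `i` depends on `Z i`, and it does so through `p * Z i * q`. -/
theorem exists_linearMap_phiPart_update {n : ℕ} [DecidableEq (Fin n)]
    {P : Finset (Finset (Fin n))} (hP : IsPartition P) (Z : Fin n → A) (i : Fin n) :
    ∃ L : A →ₗ[ℂ] ℂ, ∀ x, phiPart φ (Function.update Z i x) P = L x := by
  obtain ⟨V, ⟨hVP, hiV⟩, huniq⟩ := hP.2 i
  obtain ⟨p, q, hpq⟩ := List.exists_prod_map_update_eq_mul_mul (sort_nodup V (· ≤ ·))
    ((mem_sort _).mpr hiV) Z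
  refine ⟨(∏ W ∈ P.erase V, φ ((W.sort (· ≤ ·)).map Z).prod) •
    φ ∘ₗ LinearMap.mulLeft ℂ p ∘ₗ LinearMap.mulRight ℂ q, fun x => ?_⟩
  have hrest : ∀ W ∈ P.erase V, φ ((W.sort (· ≤ ·)).map (Function.update Z i x)).prod
      = φ ((W.sort (· ≤ ·)).map Z).prod := by
    intro W hW
    have hiW : i ∉ W := fun h => (mem_erase.mp hW).1 (huniq W ⟨(mem_erase.mp hW).2, h⟩)
    congr 2
    exact List.map_congr_left fun a ha =>
      Function.update_of_ne (ne_of_mem_of_not_mem ((mem_sort _).mp ha) hiW) _ _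
  rw [phiPart, ← mul_prod_erase _ _ hVP, prod_congr rfl hrest, hpq, mul_comm]
  simp [mul_assoc]

noncomputable def phiPartMultilinearMap {n : ℕ} {P : Finset (Finset (Fin n))}
    (hP : IsPartition P) : MultilinearMap ℂ (fun _ : Fin n => A) ℂ where
  toFun Z := phiPart φ Z P
  map_update_add' Z i x y := by
    obtain ⟨L, hL⟩ := exists_linearMap_phiPart_update φ hP Z i
    simp only [hL, map_add]
  map_update_smul' Z i c x := by
    obtain ⟨L, hL⟩ := exists_linearMap_phiPart_update φ hP Z i
    simp only [hL, map_smul, smul_eq_mul]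

theorem phiPart_sum_smul {n : ℕ} {ι : Type*} [Fintype ι] [DecidableEq ι]
    {P : Finset (Finset (Fin n))} (hP : IsPartition P) (a : Fin n → ι → ℂ)
    (W : Fin n → ι → A) :
    phiPart φ (fun i => ∑ k, a i k • W i k) P
      = ∑ ε : Fin n → ι, (∏ i, a i (ε i)) * phiPart φ (fun i => W i (ε i)) P := by
  change phiPartMultilinearMap φ hP _ = _
  rw [MultilinearMap.map_sum]
  simp only [MultilinearMap.map_smul_univ, smul_eq_mul]
  rfl

theorem cumulant_sum_smul {n : ℕ} {ι : Type*} [Fintype ι] [DecidableEq ι]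
    (χ : Fin n → Bool) (μ : Finset (Finset (Fin n)) → Finset (Finset (Fin n)) → ℂ)
    (P : Finset (Finset (Fin n))) (a : Fin n → ι → ℂ) (W : Fin n → ι → A) :
    cumulant φ χ μ P (fun i => ∑ k, a i k • W i k)
      = ∑ ε : Fin n → ι, (∏ i, a i (ε i)) * cumulant φ χ μ P (fun i => W i (ε i)) := by
  simp only [cumulant, mul_sum]
  rw [sum_comm]
  refine sum_congr rfl fun σ hσ => ?_
  rw [phiPart_sum_smul φ (IsPartition.of_mem_BNC (mem_filter.mp hσ).1), sum_mul]
  simp only [mul_assoc]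

theorem TwoFacedBiFree.cumulant_sum_smul {μ : MoebiusFamily} {T S : Fin 2 → A}
    (hbf : TwoFacedBiFree φ μ T S) {n : ℕ} (hn : 2 ≤ n) (χ : Fin n → Bool)
    (a : Fin n → Fin 2 → ℂ) :
    cumulant φ χ (μ n χ) (onePart n) (fun i => ∑ k, a i k • if χ i = true then T k else S k)
      = (∏ i, a i 0) * cumulant φ χ (μ n χ) (onePart n) (fun i => if χ i then T 0 else S 0)
        + (∏ i, a i 1) * cumulant φ χ (μ n χ) (onePart n) (fun i => if χ i then T 1 else S 1) := by
  have hpos : 0 < n := by omega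
  rw [BiFreeNL.cumulant_sum_smul, Fintype.sum_eq_add (fun _ => 0) (fun _ => 1)
    (fun h => zero_ne_one (congrFun h ⟨0, hpos⟩))]
  rintro ε ⟨hε0, hε1⟩
  suffices hmixed : ∃ i j, ε i ≠ ε j by rw [hbf n hn χ ε hmixed, mul_zero]
  by_contra! hconst
  obtain h | h := Fin.exists_fin_two.mp ⟨ε ⟨0, hpos⟩, rfl⟩
  · exact hε0 (funext fun j => (hconst j _).trans h)
  · exact hε1 (funext fun j => (hconst j _).trans h)

def rotation (c s : ℂ) : Matrix (Fin 2) (Fin 2) ℂ := !![c, s; -s, c]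

/-- For `c = cos θ`, `s = sin θ` this is the pair `(X₃, X₄)` of the rotated variables. -/
def rotate (c s : ℂ) (X : Fin 2 → A) : Fin 2 → A := ![c • X 0 + s • X 1, (-s) • X 0 + c • X 1]

theorem rotate_apply (c s : ℂ) (X : Fin 2 → A) (k : Fin 2) :
    rotate c s X k = ∑ j, rotation c s k j • X j := by
  fin_cases k <;> simp [rotate, rotation]

section Rotation

variable {μ : MoebiusFamily} {T S : Fin 2 → A} {c s : ℂ}

theorem TwoFacedBiFree.cumulant_rotation_eq_zero (hbf : TwoFacedBiFree φ μ T S)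
    (hrot : TwoFacedBiFree φ μ (rotate c s T) (rotate c s S)) {n : ℕ} (hn : 2 ≤ n)
    (χ : Fin n → Bool) (ε : Fin n → Fin 2) (hε : ∃ i j, ε i ≠ ε j) :
    (∏ i, rotation c s (ε i) 0)
        * cumulant φ χ (μ n χ) (onePart n) (fun i => if χ i then T 0 else S 0)
      + (∏ i, rotation c s (ε i) 1)
        * cumulant φ χ (μ n χ) (onePart n) (fun i => if χ i then T 1 else S 1) = 0 := by
  rw [← hbf.cumulant_sum_smul φ hn χ (fun i => rotation c s (ε i)), ← hrot n hn χ ε hε]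
  congr 1
  funext i
  cases χ i <;> simp [rotate_apply]

theorem TwoFacedBiFree.pow_mul_cumulant_eq_of_rotate (hbf : TwoFacedBiFree φ μ T S)
    (hrot : TwoFacedBiFree φ μ (rotate c s T) (rotate c s S)) (hc : c ≠ 0) (hs : s ≠ 0)
    (m : ℕ) (χ : Fin (m + 2) → Bool) :
    c ^ m * cumulant φ χ (μ _ χ) (onePart _) (fun i => if χ i then T 0 else S 0)
      = s ^ m * cumulant φ χ (μ _ χ) (onePart _) (fun i => if χ i then T 1 else S 1) := by
  have h := hbf.cumulant_rotation_eq_zero φ hrot (by omega) χ (Fin.cons 1 fun _ => 0)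
    ⟨0, 1, by simp⟩
  simp only [Fin.prod_univ_succ, Fin.cons_zero, Fin.cons_succ, prod_const, card_univ,
    Fintype.card_fin, rotation, Matrix.of_apply, Matrix.cons_val', Matrix.cons_val_zero,
    Matrix.cons_val_one, Matrix.empty_val', Matrix.cons_val_fin_one] at h
  refine mul_left_cancel₀ (mul_ne_zero hc hs) ?_
  linear_combination -h

theorem TwoFacedBiFree.cumulant_combination_eq_zero_of_rotate
    (hbf : TwoFacedBiFree φ μ T S) (hrot : TwoFacedBiFree φ μ (rotate c s T) (rotate c s S))
    (m : ℕ) (χ : Fin (m + 3) → Bool) :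
    s ^ 2 * c ^ (m + 1) * cumulant φ χ (μ _ χ) (onePart _) (fun i => if χ i then T 0 else S 0)
      + c ^ 2 * s ^ (m + 1)
        * cumulant φ χ (μ _ χ) (onePart _) (fun i => if χ i then T 1 else S 1) = 0 := by
  have h := hbf.cumulant_rotation_eq_zero φ hrot (by omega) χ
    (Fin.cons 1 (Fin.cons 1 fun _ => 0)) ⟨0, Fin.last _, by simp⟩
  simp only [Fin.prod_univ_succ, Fin.cons_zero, Fin.cons_succ, prod_const, card_univ,
    Fintype.card_fin, rotation, Matrix.of_apply, Matrix.cons_val', Matrix.cons_val_zero,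
    Matrix.cons_val_one, Matrix.empty_val', Matrix.cons_val_fin_one] at h
  linear_combination h

theorem TwoFacedBiFree.isBiFreeCentralLimit_of_rotate (hbf : TwoFacedBiFree φ μ T S)
    (hrot : TwoFacedBiFree φ μ (rotate c s T) (rotate c s S)) (hc : c ≠ 0) (hs : s ≠ 0)
    (hcs : s ^ 2 + c ^ 2 ≠ 0) :
    (IsBiFreeCentralLimit φ μ (T 0) (S 0) ∧ IsBiFreeCentralLimit φ μ (T 1) (S 1))
      ∧ EqualSecondOrderCumulants φ μ T S := by
  have hvanish : ∀ m (χ : Fin (m + 3) → Bool),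
      cumulant φ χ (μ _ χ) (onePart _) (fun i => if χ i then T 0 else S 0) = 0
        ∧ cumulant φ χ (μ _ χ) (onePart _) (fun i => if χ i then T 1 else S 1) = 0 := by
    intro m χ
    have h₁ := hbf.pow_mul_cumulant_eq_of_rotate φ hrot hc hs (m + 1) χ
    have h₂ := hbf.cumulant_combination_eq_zero_of_rotate φ hrot m χ
    have hκ₁ : s ^ (m + 1) * (s ^ 2 + c ^ 2)
        * cumulant φ χ (μ _ χ) (onePart _) (fun i => if χ i then T 1 else S 1) = 0 := by
      linear_combination h₂ - s ^ 2 * h₁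
    have hκ₁' := (mul_eq_zero.mp hκ₁).resolve_left (mul_ne_zero (pow_ne_zero _ hs) hcs)
    simpa [hκ₁', hc] using h₁
  refine ⟨⟨?_, ?_⟩, fun χ => by simpa using hbf.pow_mul_cumulant_eq_of_rotate φ hrot hc hs 0 χ⟩
    <;> intro n hn χ <;> obtain ⟨m, rfl⟩ := Nat.exists_eq_add_of_le' hn
  exacts [(hvanish m χ).1, (hvanish m χ).2]

end Rotation

end BiFreeNL

open BiFreeNL in
theorem kac_loeve_forward_general
    {A : Type*} [Ring A] [Algebra ℂ A]
    (φ : A →ₗ[ℂ] ℂ)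
    (μ : MoebiusFamily)
    (T S : Fin 2 → A)
    (hbf : TwoFacedBiFree φ μ T S)
    (θ : ℝ) (hθ : θ ∈ Set.Ioo 0 (Real.pi / 2))
    (hbf34 : TwoFacedBiFree φ μ
      ![(Real.cos θ : ℂ) • T 0 + (Real.sin θ : ℂ) • T 1,
        (-(Real.sin θ : ℂ)) • T 0 + (Real.cos θ : ℂ) • T 1]
      ![(Real.cos θ : ℂ) • S 0 + (Real.sin θ : ℂ) • S 1,
        (-(Real.sin θ : ℂ)) • S 0 + (Real.cos θ : ℂ) • S 1]) :
    (IsBiFreeCentralLimit φ μ (T 0) (S 0) ∧ IsBiFreeCentralLimit φ μ (T 1) (S 1))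
      ∧ EqualSecondOrderCumulants φ μ T S := by
  have hcos : 0 < Real.cos θ :=
    Real.cos_pos_of_mem_Ioo ⟨by linarith [hθ.1, Real.pi_pos], hθ.2⟩
  have hsin : 0 < Real.sin θ :=
    Real.sin_pos_of_pos_of_lt_pi hθ.1 (by linarith [hθ.2, Real.pi_pos])
  refine hbf.isBiFreeCentralLimit_of_rotate φ hbf34 (by exact_mod_cast hcos.ne')
    (by exact_mod_cast hsin.ne') ?_
  exact_mod_cast (Real.sin_sq_add_cos_sq θ).trans_ne one_ne_zero

open BiFreeNL in
/-- **Bi-Free Kac/Loeve Theorem, forward direction.** -/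
theorem kac_loeve_forward
    {A : Type*} [Ring A] [Algebra ℂ A]
    (φ : A →ₗ[ℂ] ℂ) (hφ : φ 1 = 1)
    (μ : MoebiusFamily) (hμ : ∀ (n : ℕ) (χ : Fin n → Bool), IsMoebius χ (μ n χ))
    (T S : Fin 2 → A)
    (hcent : ∀ k, φ (T k) = 0 ∧ φ (S k) = 0)
    (hbf : TwoFacedBiFree φ μ T S)
    (θ : ℝ) (hθ : θ ∈ Set.Ioo 0 (Real.pi / 2))
    (hbf34 : TwoFacedBiFree φ μ
      ![(Real.cos θ : ℂ) • T 0 + (Real.sin θ : ℂ) • T 1,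
        (-(Real.sin θ : ℂ)) • T 0 + (Real.cos θ : ℂ) • T 1]
      ![(Real.cos θ : ℂ) • S 0 + (Real.sin θ : ℂ) • S 1,
        (-(Real.sin θ : ℂ)) • S 0 + (Real.cos θ : ℂ) • S 1]) :
    (IsBiFreeCentralLimit φ μ (T 0) (S 0) ∧ IsBiFreeCentralLimit φ μ (T 1) (S 1))
      ∧ EqualSecondOrderCumulants φ μ T S :=
  kac_loeve_forward_general φ μ T S hbf θ hθ hbf34
end

section
/- (Boolean moment and cumulant formulae, scalar case.) Let (A, φ) be a non-commutative probability space and let {(C'_k, D'_k)}_{k∈K} be a bi-free Boolean system with respect to φ. Let χ : {1,…,2n} → {ℓ,r} be alternating, let ε : {1,…,2n} → K satisfy ε(2m−1) = ε(2m) for all m ∈ {1,…,n}, and let T_m ∈ C'_{ε(2m−1)} and S_m ∈ D'_{ε(2m)} for m ∈ {1,…,n}. Then: (i) φ(T_1 S_1 T_2 S_2 ⋯ T_n S_n) = Σ_{π ∈ BNC_b(χ)} κ_π(T_1, S_1, …, T_n, S_n); (ii) κ_{1_χ}(T_1, S_1, …, T_n, S_n) = Σ_{π ∈ BNC_b(χ)}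 φ_π(T_1, S_1, …, T_n, S_n)·μ_BNC(π, 1_χ); and (iii) κ_{1_χ}(T_1, S_1, …, T_n, S_n) = 0 unless ε is constant. -/
open Finset

namespace BiFreeNL

open scoped Classical

variable {A : Type*} [Ring A] [Algebra ℂ A]

/-- The family of pairs of faces `{(C k, D k)}_{k ∈ K}` is bi-freely independent with
respect to `φ` : `κ_{1_χ}(Z_1, …, Z_n) = 0` whenever `ε` is non-constant, `Z_j ∈ C (ε j)`
when `χ j = ℓ` and `Z_j ∈ D (ε j)` when `χ j = r`. -/
def BiFreeFamily {A : Type*} [Ring A] [Algebra ℂ A] {K : Type*} (φ : A →ₗ[ℂ] ℂ)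
    (μ : MoebiusFamily) (C D : K → Set A) : Prop :=
  ∀ (n : ℕ), 2 ≤ n → ∀ (χ : Fin n → Bool) (ε : Fin n → K), (∃ i j, ε i ≠ ε j) →
    ∀ Z : Fin n → A,
      (∀ i, (χ i = true → Z i ∈ C (ε i)) ∧ (χ i = false → Z i ∈ D (ε i))) →
      cumulant φ χ (μ n χ) (onePart n) Z = 0

/-- The subsets `{S k}_{k ∈ K}` are Boolean independent with respect to `φ` :
`φ(Z_1 ⋯ Z_n) = φ(Z_1) ⋯ φ(Z_n)` whenever `Z_m ∈ S (k m)` and consecutive indices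
`k m` differ. -/
def BooleanIndependent {A : Type*} [Ring A] [Algebra ℂ A] {K : Type*} (φ : A →ₗ[ℂ] ℂ)
    (S : K → Set A) : Prop :=
  ∀ (n : ℕ) (k : Fin n → K), (∀ i j : Fin n, (j : ℕ) = (i : ℕ) + 1 → k i ≠ k j) →
    ∀ Z : Fin n → A, (∀ i, Z i ∈ S (k i)) →
      φ (List.ofFn Z).prod = ∏ i, φ (Z i)

/-- The set of products `{T * S | T ∈ C, S ∈ D}`. -/
def prodSet {A : Type*} [Ring A] (C D : Set A) : Set A :=
  {x | ∃ T ∈ C, ∃ S ∈ D, x = T * S}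


/-- `{(C' k, D' k)}_{k ∈ K}` is a bi-free Boolean system with respect to `φ` :
the subsets sit inside a bi-free family of pairs of faces, `ℂ·C'_k ⊆ C'_k`,
products of two elements of `C'_k` (or of `D'_k`) vanish, and alternating moments
starting and ending in the same face vanish. -/
def BiFreeBooleanSystem {A : Type*} [Ring A] [Algebra ℂ A] {K : Type*} (φ : A →ₗ[ℂ] ℂ)
    (μ : MoebiusFamily) (C' D' : K → Set A) : Prop :=
  ∃ C D : K → Subalgebra ℂ A,
    BiFreeFamily φ μ (fun k => (C k : Set A)) (fun k => (D k : Set A)) ∧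
    (∀ k, C' k ⊆ (C k : Set A)) ∧ (∀ k, D' k ⊆ (D k : Set A)) ∧
    (∀ k (z : ℂ), ∀ x ∈ C' k, z • x ∈ C' k) ∧
    (∀ k, ∀ x ∈ C' k, ∀ y ∈ C' k, x * y = 0) ∧
    (∀ k, ∀ x ∈ D' k, ∀ y ∈ D' k, x * y = 0) ∧
    (∀ k (m : ℕ) (x : Fin (m + 1) → A) (y : Fin m → A),
      (∀ i, x i ∈ C' k) → (∀ i, y i ∈ D' k) →
      φ (x 0 * (List.ofFn fun i : Fin m => y i * x i.succ).prod) = 0) ∧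
    (∀ k (m : ℕ) (y : Fin (m + 1) → A) (x : Fin m → A),
      (∀ i, y i ∈ D' k) → (∀ i, x i ∈ C' k) →
      φ (y 0 * (List.ofFn fun i : Fin m => x i * y i.succ).prod) = 0)

/-- The alternating map `χ : {1, …, 2n} → {ℓ, r}` (left on odd positions, i.e. even
`Fin`-indices). -/
def altChi (n : ℕ) : Fin (2 * n) → Bool := fun i => decide ((i : ℕ) % 2 = 0)

/-- The index `2m - 1` (1-indexed), i.e. the position of `T_m`. -/
def dIdx {n : ℕ} (m : Fin n) : Fin (2 * n) := ⟨2 * (m : ℕ), by have := m.isLt; omega⟩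

/-- The index `2m` (1-indexed), i.e. the position of `S_m`. -/
def dIdx' {n : ℕ} (m : Fin n) : Fin (2 * n) := ⟨2 * (m : ℕ) + 1, by have := m.isLt; omega⟩

/-- The Boolean bi-non-crossing partitions `BNC_b(χ)` for alternating `χ` : those
`π ∈ BNC(χ)` in which `2k - 1` and `2k` always share a block. -/
noncomputable def BNCb (n : ℕ) : Finset (Finset (Finset (Fin (2 * n)))) :=
  (BNC (altChi n)).filter fun P => ∀ m : Fin n, SameBlock P (dIdx m) (dIdx' m)

/-- The tuple `(T_1, S_1, T_2, S_2, …, T_n, S_n)`. -/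
def interleave {A : Type*} {n : ℕ} (T S : Fin n → A) : Fin (2 * n) → A :=
  fun i => if (i : ℕ) % 2 = 0 then T ⟨(i : ℕ) / 2, by have := i.isLt; omega⟩
           else S ⟨(i : ℕ) / 2, by have := i.isLt; omega⟩

end BiFreeNL

/-!
Call a word (types `χ`, labels `k`) admissible if it has a bi-non-crossing partition into
blocks with constant label along which left and right letters alternate, the first and last
letter of each block lying on different sides. A non-admissible word has zero moment, by strong
induction on its length: for constant labels this is conditions (1)–(3) of a bi-free Boolean
system; otherwise bi-freeness kills the full cumulant, so the moment is
`-∑_{σ ≠ 1} φ_σ μ(σ, 1)`, and each such `σ` has a non-admissible block, since admissible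
partitions of all blocks of `σ` would glue to one of the whole word.

For the alternating `χ`, every admissible partition joins `2m - 1` and `2m` (downward induction
on `m`, using that blocks do not cross). So `φ_σ` vanishes off `BNC_b(χ)`; (i) and (ii) follow
by Möbius inversion, and (iii) is bi-freeness.
-/

namespace BiFreeNL

open scoped Classical

section Order

variable {p : ℕ} {χ : Fin p → Bool} {i j : Fin p}

lemma chiRank_lt_iff_of_left (hi : χ i = true) (hj : χ j = true) :
    chiRank χ i < chiRank χ j ↔ i < j := by
  simp only [chiRank, hi, hj, if_true]
  constructor
  · intro h
    by_contra! hji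
    refine h.not_ge (card_le_card fun x hx => ?_)
    simp only [mem_filter] at hx ⊢
    exact ⟨hx.1, hx.2.1, hx.2.2.trans_le hji⟩
  · intro hij
    refine card_lt_card ⟨fun x hx => ?_, fun hsub => ?_⟩
    · simp only [mem_filter] at hx ⊢
      exact ⟨hx.1, hx.2.1, hx.2.2.trans hij⟩
    · simpa using hsub (mem_filter.2 ⟨mem_univ i, hi, hij⟩)

lemma chiRank_lt_iff_of_right (hi : χ i = false) (hj : χ j = false) :
    chiRank χ i < chiRank χ j ↔ j < i := by
  simp only [chiRank, hi, hj, Bool.false_eq_true, if_false, Nat.add_lt_add_iff_left]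
  constructor
  · intro h
    by_contra! hij
    refine h.not_ge (card_le_card fun x hx => ?_)
    simp only [mem_filter] at hx ⊢
    exact ⟨hx.1, hx.2.1, hij.trans_lt hx.2.2⟩
  · intro hji
    refine card_lt_card ⟨fun x hx => ?_, fun hsub => ?_⟩
    · simp only [mem_filter] at hx ⊢
      exact ⟨hx.1, hx.2.1, hji.trans hx.2.2⟩
    · simpa using hsub (mem_filter.2 ⟨mem_univ i, hi, hji⟩)

lemma chiRank_lt_of_left_of_right (hi : χ i = true) (hj : χ j = false) :
    chiRank χ i < chiRank χ j := by
  simp only [chiRank, hi, hj, Bool.false_eq_true, if_true, if_false]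
  refine Nat.lt_add_right _ (card_lt_card ⟨fun x hx => ?_, fun hsub => ?_⟩)
  · simp only [mem_filter] at hx ⊢
    exact ⟨hx.1, hx.2.1⟩
  · simpa using hsub (mem_filter.2 ⟨mem_univ i, hi⟩)

lemma chiRank_comp_lt_iff {q : ℕ} {f : Fin q → Fin p} (hf : StrictMono f) {a b : Fin q} :
    chiRank (χ ∘ f) a < chiRank (χ ∘ f) b ↔ chiRank χ (f a) < chiRank χ (f b) := by
  cases ha : χ (f a) <;> cases hb : χ (f b)
  · rw [chiRank_lt_iff_of_right (χ := χ ∘ f) ha hb, chiRank_lt_iff_of_right ha hb,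
      hf.lt_iff_lt]
  · exact iff_of_false (chiRank_lt_of_left_of_right (χ := χ ∘ f) hb ha).not_gt
      (chiRank_lt_of_left_of_right hb ha).not_gt
  · exact iff_of_true (chiRank_lt_of_left_of_right (χ := χ ∘ f) ha hb)
      (chiRank_lt_of_left_of_right ha hb)
  · rw [chiRank_lt_iff_of_left (χ := χ ∘ f) ha hb, chiRank_lt_iff_of_left ha hb,
      hf.lt_iff_lt]

end Order

section Partitions

variable {p : ℕ}

lemma IsPartition.eq_of_mem {P : Finset (Finset (Fin p))} (hP : IsPartition P)
    {V W : Finset (Fin p)} {i : Fin p} (hV : V ∈ P) (hW : W ∈ P) (hiV : i ∈ V)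
    (hiW : i ∈ W) : V = W :=
  (hP.2 i).unique ⟨hV, hiV⟩ ⟨hW, hiW⟩

lemma refines_refl (P : Finset (Finset (Fin p))) : Refines P P :=
  fun V hV => ⟨V, hV, subset_rfl⟩

lemma refines_onePart (P : Finset (Finset (Fin p))) : Refines P (onePart p) :=
  fun V _ => ⟨univ, mem_singleton_self _, subset_univ V⟩

lemma SameBlock.of_refines {σ π : Finset (Finset (Fin p))} {i j : Fin p}
    (h : SameBlock σ i j) (hσπ : Refines σ π) : SameBlock π i j := by
  obtain ⟨B, hB, hiB, hjB⟩ := h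
  obtain ⟨W, hW, hBW⟩ := hσπ B hB
  exact ⟨W, hW, hBW hiB, hBW hjB⟩

lemma mem_BNC_iff {χ : Fin p → Bool} {P : Finset (Finset (Fin p))} :
    P ∈ BNC χ ↔ IsBiNonCrossing χ P := by
  simp [BNC]

lemma onePart_mem_BNC (hp : 0 < p) (χ : Fin p → Bool) : onePart p ∈ BNC χ := by
  refine mem_BNC_iff.2 ⟨⟨?_, fun i => ⟨univ, ⟨mem_singleton_self _, mem_univ i⟩, ?_⟩⟩, ?_⟩
  · intro V hV
    obtain rfl := mem_singleton.1 hV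
    exact univ_nonempty_iff.2 ⟨⟨0, hp⟩⟩
  · exact fun W hW => mem_singleton.1 hW.1
  · exact fun _ _ _ _ _ _ _ _ _ => ⟨univ, mem_singleton_self _, mem_univ _, mem_univ _⟩

lemma empty_mem_BNC (χ : Fin 0 → Bool) : (∅ : Finset (Finset (Fin 0))) ∈ BNC χ :=
  mem_BNC_iff.2 ⟨⟨fun _ h => absurd h (notMem_empty _), fun i => i.elim0⟩,
    fun u _ _ _ _ _ _ _ _ => u.elim0⟩

lemma IsPartition.eq_onePart_of_mem {σ : Finset (Finset (Fin p))} (hσ : IsPartition σ)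
    (huniv : univ ∈ σ) : σ = onePart p := by
  refine eq_singleton_iff_unique_mem.2 ⟨huniv, fun B hB => ?_⟩
  obtain ⟨b, hb⟩ := hσ.1 B hB
  exact hσ.eq_of_mem hB huniv hb (mem_univ b)

lemma IsPartition.card_lt_of_ne_onePart {σ : Finset (Finset (Fin p))} (hσ : IsPartition σ)
    (hne : σ ≠ onePart p) {V : Finset (Fin p)} (hV : V ∈ σ) : V.card < p := by
  have hVne : V ≠ univ := fun h => hne (hσ.eq_onePart_of_mem (h ▸ hV))
  simpa using card_lt_card (ssubset_univ_iff.2 hVne)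

lemma filter_refines_onePart (χ : Fin p → Bool) :
    (BNC χ).filter (fun σ => Refines σ (onePart p)) = BNC χ :=
  filter_true_of_mem fun σ _ => refines_onePart σ

lemma IsMoebius.apply_onePart_onePart {χ : Fin p → Bool}
    {μ : Finset (Finset (Fin p)) → Finset (Finset (Fin p)) → ℂ}
    (hμ : IsMoebius χ μ) (hp : 0 < p) : μ (onePart p) (onePart p) = 1 := by
  have h := hμ.2.1 _ _ (onePart_mem_BNC hp χ) (onePart_mem_BNC hp χ) (refines_refl _)
  have hsingle : (BNC χ).filter (fun t => Refines (onePart p) t ∧ Refines t (onePart p))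
      = {onePart p} := by
    refine eq_singleton_iff_unique_mem.2
      ⟨mem_filter.2 ⟨onePart_mem_BNC hp χ, refines_refl _, refines_refl _⟩, fun t ht => ?_⟩
    obtain ⟨ht, h1, -⟩ := mem_filter.1 ht
    obtain ⟨W, hW, hW'⟩ := h1 univ (mem_singleton_self _)
    rw [univ_subset_iff] at hW'
    exact (mem_BNC_iff.1 ht).1.eq_onePart_of_mem (hW' ▸ hW)
  rwa [hsingle, sum_singleton, if_pos rfl] at h

end Partitions

section MomentCumulant

variable {A : Type*} [Ring A] [Algebra ℂ A] {p : ℕ} (φ : A →ₗ[ℂ] ℂ) {χ : Fin p → Bool}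
  {μ : Finset (Finset (Fin p)) → Finset (Finset (Fin p)) → ℂ}

lemma phiPart_onePart (Z : Fin p → A) : phiPart φ Z (onePart p) = φ (List.ofFn Z).prod := by
  rw [phiPart, onePart, prod_singleton, Fin.sort_univ, ← List.ofFn_eq_map]

lemma sum_cumulant_eq_moment (hμ : IsMoebius χ μ) (hp : 0 < p) (Z : Fin p → A) :
    ∑ π ∈ BNC χ, cumulant φ χ μ π Z = φ (List.ofFn Z).prod := by
  have hinv : ∀ σ ∈ BNC χ, ∑ π ∈ (BNC χ).filter (Refines σ ·), μ σ π
      = if σ = onePart p then 1 else 0 := by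
    intro σ hσ
    rw [← hμ.2.2 σ _ hσ (onePart_mem_BNC hp χ) (refines_onePart σ)]
    simp only [refines_onePart, and_true]
  calc ∑ π ∈ BNC χ, cumulant φ χ μ π Z
      = ∑ σ ∈ BNC χ, phiPart φ Z σ * ∑ π ∈ (BNC χ).filter (Refines σ ·), μ σ π := by
        simp only [cumulant, mul_sum]
        exact sum_comm' fun π σ => by simp only [mem_filter]; tauto
    _ = φ (List.ofFn Z).prod := by
        rw [sum_congr rfl fun σ hσ => by rw [hinv σ hσ]]
        simp [onePart_mem_BNC hp χ, phiPart_onePart]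

lemma cumulant_onePart_eq_moment (hμ : IsMoebius χ μ) (hp : 0 < p) {Z : Fin p → A}
    (hZ : ∀ σ ∈ BNC χ, σ ≠ onePart p → phiPart φ Z σ = 0) :
    cumulant φ χ μ (onePart p) Z = φ (List.ofFn Z).prod := by
  rw [cumulant, filter_refines_onePart,
    sum_eq_single (onePart p) (fun σ hσ hne => by rw [hZ σ hσ hne, zero_mul])
      (fun h => absurd (onePart_mem_BNC hp χ) h),
    hμ.apply_onePart_onePart hp, mul_one, phiPart_onePart]

end MomentCumulant

section Restriction

variable {p : ℕ}

/-- Restricting a word `Z` to the block `V` gives the word `Z ∘ emb V`. -/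
noncomputable def emb (V : Finset (Fin p)) : Fin V.card → Fin p :=
  V.orderEmbOfFin rfl

lemma emb_strictMono (V : Finset (Fin p)) : StrictMono (emb V) :=
  (V.orderEmbOfFin rfl).strictMono

lemma emb_mem (V : Finset (Fin p)) (j : Fin V.card) : emb V j ∈ V :=
  orderEmbOfFin_mem V rfl j

lemma exists_emb_eq {V : Finset (Fin p)} {i : Fin p} (hi : i ∈ V) : ∃ j, emb V j = i := by
  rwa [← Set.mem_range, emb, range_orderEmbOfFin]

lemma sort_map_eq_ofFn_emb {β : Type*} (V : Finset (Fin p)) (Z : Fin p → β) :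
    (V.sort (· ≤ ·)).map Z = List.ofFn (Z ∘ emb V) := by
  refine List.ext_getElem (by simp) fun i _ _ => ?_
  simp only [List.getElem_map, List.getElem_ofFn, Function.comp_apply]
  rfl

def IsBiNonCrossingOn (χ : Fin p → Bool) (S : Finset (Fin p))
    (ρ : Finset (Finset (Fin p))) : Prop :=
  (∀ B ∈ ρ, B.Nonempty ∧ B ⊆ S) ∧ (∀ i ∈ S, ∃! B : Finset (Fin p), B ∈ ρ ∧ i ∈ B) ∧
  ∀ u₁ v₁ u₂ v₂ : Fin p, chiRank χ u₁ < chiRank χ v₁ → chiRank χ v₁ < chiRank χ u₂ →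
    chiRank χ u₂ < chiRank χ v₂ → SameBlock ρ u₁ u₂ → SameBlock ρ v₁ v₂ → SameBlock ρ u₁ v₁

lemma isBiNonCrossingOn_image_emb {V : Finset (Fin p)} {χ : Fin p → Bool}
    {P : Finset (Finset (Fin V.card))} (hP : P ∈ BNC (χ ∘ emb V)) :
    IsBiNonCrossingOn χ V (P.image (image (emb V))) := by
  obtain ⟨⟨hPne, hPcov⟩, hPcross⟩ := mem_BNC_iff.1 hP
  have hinj := (emb_strictMono V).injective
  refine ⟨?_, ?_, ?_⟩
  · simp only [mem_image, forall_exists_index, and_imp]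
    rintro _ B₀ hB₀ rfl
    exact ⟨(hPne B₀ hB₀).image _, fun x hx => by
      obtain ⟨a, -, rfl⟩ := mem_image.1 hx
      exact emb_mem V a⟩
  · intro i hi
    obtain ⟨a, rfl⟩ := exists_emb_eq hi
    obtain ⟨B₀, ⟨hB₀, haB₀⟩, huniq⟩ := hPcov a
    refine ⟨B₀.image (emb V), ⟨mem_image_of_mem _ hB₀, mem_image_of_mem _ haB₀⟩, ?_⟩
    rintro _ ⟨hC, haC⟩
    obtain ⟨C₀, hC₀, rfl⟩ := mem_image.1 hC
    rw [huniq C₀ ⟨hC₀, (hinj.mem_finset_image).1 haC⟩]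
  · rintro u₁ v₁ u₂ v₂ h₁ h₂ h₃ ⟨_, hC, hu₁, hu₂⟩ ⟨_, hD, hv₁, hv₂⟩
    obtain ⟨C₀, hC₀, rfl⟩ := mem_image.1 hC
    obtain ⟨D₀, hD₀, rfl⟩ := mem_image.1 hD
    obtain ⟨a₁, ha₁, rfl⟩ := mem_image.1 hu₁
    obtain ⟨a₂, ha₂, rfl⟩ := mem_image.1 hu₂
    obtain ⟨b₁, hb₁, rfl⟩ := mem_image.1 hv₁
    obtain ⟨b₂, hb₂, rfl⟩ := mem_image.1 hv₂
    have hmono := fun {a b} => chiRank_comp_lt_iff (χ := χ) (emb_strictMono V) (a := a) (b := b)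
    obtain ⟨E₀, hE₀, haE, hbE⟩ := hPcross a₁ b₁ a₂ b₂ (hmono.2 h₁) (hmono.2 h₂) (hmono.2 h₃)
      ⟨C₀, hC₀, ha₁, ha₂⟩ ⟨D₀, hD₀, hb₁, hb₂⟩
    exact ⟨E₀.image (emb V), mem_image_of_mem _ hE₀, mem_image_of_mem _ haE,
      mem_image_of_mem _ hbE⟩

end Restriction

section Gluing

variable {p : ℕ} {χ : Fin p → Bool} {σ : Finset (Finset (Fin p))}
  {g : Finset (Fin p) → Finset (Finset (Fin p))}

lemma refines_biUnion (hg : ∀ V ∈ σ, IsBiNonCrossingOn χ V (g V)) :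
    Refines (σ.biUnion g) σ := by
  intro B hB
  obtain ⟨V, hV, hBV⟩ := mem_biUnion.1 hB
  exact ⟨V, hV, ((hg V hV).1 B hBV).2⟩

lemma biUnion_mem_BNC (hσ : σ ∈ BNC χ) (hg : ∀ V ∈ σ, IsBiNonCrossingOn χ V (g V)) :
    σ.biUnion g ∈ BNC χ := by
  obtain ⟨hσpart, hσcross⟩ := mem_BNC_iff.1 hσ
  refine mem_BNC_iff.2 ⟨⟨fun B hB => ?_, fun i => ?_⟩, ?_⟩
  · obtain ⟨V, hV, hBV⟩ := mem_biUnion.1 hB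
    exact ((hg V hV).1 B hBV).1
  · obtain ⟨V, ⟨hV, hiV⟩, -⟩ := hσpart.2 i
    obtain ⟨B, ⟨hB, hiB⟩, hBuniq⟩ := (hg V hV).2.1 i hiV
    refine ⟨B, ⟨mem_biUnion.2 ⟨V, hV, hB⟩, hiB⟩, fun C ⟨hC, hiC⟩ => ?_⟩
    obtain ⟨W, hW, hCW⟩ := mem_biUnion.1 hC
    obtain rfl := hσpart.eq_of_mem hW hV (((hg W hW).1 C hCW).2 hiC) hiV
    exact hBuniq C ⟨hCW, hiC⟩
  · rintro u₁ v₁ u₂ v₂ h₁ h₂ h₃ ⟨B, hB, hu₁, hu₂⟩ ⟨D, hD, hv₁, hv₂⟩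
    obtain ⟨V, hV, hBV⟩ := mem_biUnion.1 hB
    obtain ⟨W, hW, hDW⟩ := mem_biUnion.1 hD
    have hBsub := ((hg V hV).1 B hBV).2
    have hDsub := ((hg W hW).1 D hDW).2
    obtain ⟨E, hE, huE, hvE⟩ := hσcross u₁ v₁ u₂ v₂ h₁ h₂ h₃ ⟨V, hV, hBsub hu₁, hBsub hu₂⟩
      ⟨W, hW, hDsub hv₁, hDsub hv₂⟩
    obtain rfl := (hσpart.eq_of_mem hE hV huE (hBsub hu₁)).symm.trans
      (hσpart.eq_of_mem hE hW hvE (hDsub hv₁))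
    obtain ⟨F, hF, hF'⟩ := (hg V hV).2.2 u₁ v₁ u₂ v₂ h₁ h₂ h₃ ⟨B, hBV, hu₁, hu₂⟩
      ⟨D, hDW, hv₁, hv₂⟩
    exact ⟨F, mem_biUnion.2 ⟨V, hV, hF⟩, hF'⟩

end Gluing

section AltBlocks

variable {p : ℕ} {K : Type*} {χ : Fin p → Bool} {k : Fin p → K}

def IsAltBlock (χ : Fin p → Bool) (k : Fin p → K) (B : Finset (Fin p)) : Prop :=
  B.Nonempty ∧ (∀ i ∈ B, ∀ j ∈ B, k i = k j) ∧
  (∀ i ∈ B, ∀ j ∈ B, i < j → (∀ l ∈ B, ¬(i < l ∧ l < j)) → χ i ≠ χ j) ∧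
  (∃ i ∈ B, ∃ j ∈ B, (∀ x ∈ B, i ≤ x ∧ x ≤ j) ∧ χ i ≠ χ j)

def HasAltPartition (χ : Fin p → Bool) (k : Fin p → K) : Prop :=
  ∃ P ∈ BNC χ, ∀ B ∈ P, IsAltBlock χ k B

lemma IsAltBlock.image_emb {V : Finset (Fin p)} {B : Finset (Fin V.card)}
    (hB : IsAltBlock (χ ∘ emb V) (k ∘ emb V) B) : IsAltBlock χ k (B.image (emb V)) := by
  obtain ⟨hne, hk, halt, i₀, hi₀, j₀, hj₀, hbound, hχ⟩ := hB
  have hmono := emb_strictMono V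
  simp only [IsAltBlock, mem_image, forall_exists_index, and_imp, forall_apply_eq_imp_iff₂]
  refine ⟨hne.image _, hk, fun a ha b hb hab hgap => halt a ha b hb (hmono.lt_iff_lt.1 hab)
    fun l hl ⟨h₁, h₂⟩ => hgap l hl ⟨hmono h₁, hmono h₂⟩, ?_⟩
  exact ⟨_, ⟨i₀, hi₀, rfl⟩, _, ⟨j₀, hj₀, rfl⟩,
    fun c hc => ⟨hmono.monotone (hbound c hc).1, hmono.monotone (hbound c hc).2⟩, hχ⟩

lemma exists_alt_refinement {σ : Finset (Finset (Fin p))} (hσ : σ ∈ BNC χ)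
    (h : ∀ V ∈ σ, HasAltPartition (χ ∘ emb V) (k ∘ emb V)) :
    ∃ ρ ∈ BNC χ, Refines ρ σ ∧ ∀ B ∈ ρ, IsAltBlock χ k B := by
  have hblock : ∀ V ∈ σ, ∃ ρ, IsBiNonCrossingOn χ V ρ ∧ ∀ B ∈ ρ, IsAltBlock χ k B := by
    intro V hV
    obtain ⟨P, hP, hPalt⟩ := h V hV
    refine ⟨P.image (image (emb V)), isBiNonCrossingOn_image_emb hP, ?_⟩
    simp only [mem_image, forall_exists_index, and_imp]
    rintro _ B₀ hB₀ rfl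
    exact (hPalt B₀ hB₀).image_emb
  choose! g hg using hblock
  refine ⟨σ.biUnion g, biUnion_mem_BNC hσ fun V hV => (hg V hV).1,
    refines_biUnion fun V hV => (hg V hV).1, fun B hB => ?_⟩
  obtain ⟨V, hV, hBV⟩ := mem_biUnion.1 hB
  exact (hg V hV).2 B hBV

lemma phiPart_eq_zero_of_not_exists_alt_refinement {A : Type*} [Ring A] [Algebra ℂ A]
    (φ : A →ₗ[ℂ] ℂ) {Z : Fin p → A} {σ : Finset (Finset (Fin p))} (hσ : σ ∈ BNC χ)
    (hno : ¬ ∃ ρ ∈ BNC χ, Refines ρ σ ∧ ∀ B ∈ ρ, IsAltBlock χ k B)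
    (hvan : ∀ V ∈ σ, ¬ HasAltPartition (χ ∘ emb V) (k ∘ emb V) →
      φ (List.ofFn (Z ∘ emb V)).prod = 0) :
    phiPart φ Z σ = 0 := by
  obtain ⟨V, hV, hVnot⟩ : ∃ V ∈ σ, ¬ HasAltPartition (χ ∘ emb V) (k ∘ emb V) := by
    by_contra! h
    exact hno (exists_alt_refinement hσ h)
  exact prod_eq_zero hV (by rw [sort_map_eq_ofFn_emb]; exact hvan V hV hVnot)

end AltBlocks

section Words

variable {A : Type*} [Ring A]

lemma list_prod_eq_zero_of_mul_eq_zero {l : List A} {i : ℕ} (hi : i + 1 < l.length)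
    (h : l[i] * l[i + 1] = 0) : l.prod = 0 := by
  rw [← List.take_append_drop i l, ← List.cons_getElem_drop_succ (h := by omega),
    ← List.cons_getElem_drop_succ (h := hi), List.prod_append, List.prod_cons, List.prod_cons,
    ← mul_assoc l[i], h, zero_mul, mul_zero]

lemma prod_ofFn_eq_zero_of_mul_eq_zero {p : ℕ} {Z : Fin p → A} {i j : Fin p}
    (hij : (j : ℕ) = i + 1) (h : Z i * Z j = 0) : (List.ofFn Z).prod = 0 :=
  list_prod_eq_zero_of_mul_eq_zero (i := i) (by simp; omega) (by simpa [← hij] using h)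

lemma prod_ofFn_eq_mul_prod_pairs {m : ℕ} (Z : Fin (2 * m + 1) → A) :
    (List.ofFn Z).prod = Z 0 * (List.ofFn fun i : Fin m =>
      Z ⟨2 * i + 1, by omega⟩ * Z ⟨2 * i + 2, by omega⟩).prod := by
  rw [List.ofFn_succ, List.prod_cons, List.ofFn_mul' (m := 2) (n := m), List.prod_flatten,
    List.map_ofFn]
  congr 3 with i
  simp [List.ofFn_succ, Fin.succ]

end Words

section BooleanPair

variable {A : Type*} [Ring A] [Algebra ℂ A] (φ : A →ₗ[ℂ] ℂ) {p : ℕ}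

def Alternates (χ : Fin p → Bool) : Prop :=
  ∀ i j : Fin p, (j : ℕ) = i + 1 → χ j ≠ χ i

lemma Alternates.eq_iff_even {χ : Fin p → Bool} (h : Alternates χ) (i : Fin p) :
    χ i = χ ⟨0, i.pos⟩ ↔ Even (i : ℕ) := by
  obtain ⟨i, hi⟩ := i
  induction i with
  | zero => simp
  | succ i ih =>
    have hne := h ⟨i, by omega⟩ ⟨i + 1, hi⟩ rfl
    rw [Nat.even_add_one, ← ih (by omega)]
    revert hne
    cases χ ⟨i + 1, hi⟩ <;> cases χ ⟨i, by omega⟩ <;> cases χ ⟨0, by omega⟩ <;> decide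

def AlternatingMomentsVanish (X Y : Set A) : Prop :=
  ∀ (m : ℕ) (x : Fin (m + 1) → A) (y : Fin m → A), (∀ i, x i ∈ X) → (∀ i, y i ∈ Y) →
    φ (x 0 * (List.ofFn fun i : Fin m => y i * x i.succ).prod) = 0

/-- Conditions (1)–(3) of a bi-free Boolean system, for a single pair `(X, Y)`. -/
def IsBooleanPair (X Y : Set A) : Prop :=
  (∀ x ∈ X, ∀ y ∈ X, x * y = 0) ∧ (∀ x ∈ Y, ∀ y ∈ Y, x * y = 0) ∧
    AlternatingMomentsVanish φ X Y ∧ AlternatingMomentsVanish φ Y X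

lemma BiFreeBooleanSystem.isBooleanPair {K : Type*} {μ : MoebiusFamily} {C' D' : K → Set A}
    (hsys : BiFreeBooleanSystem φ μ C' D') (k : K) : IsBooleanPair φ (C' k) (D' k) := by
  obtain ⟨-, -, -, -, -, -, hC, hD, hCD, hDC⟩ := hsys
  exact ⟨hC k, hD k, hCD k, hDC k⟩

variable {φ} {X Y : Set A}

lemma AlternatingMomentsVanish.moment_eq_zero (h : AlternatingMomentsVanish φ X Y) {m : ℕ}
    {Z : Fin (2 * m + 1) → A} (hZ : ∀ i : Fin (2 * m + 1), Z i ∈ if Even (i : ℕ) then X else Y) :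
    φ (List.ofFn Z).prod = 0 := by
  rw [prod_ofFn_eq_mul_prod_pairs]
  exact h m (fun i => Z ⟨2 * i, by omega⟩) (fun i => Z ⟨2 * i + 1, by omega⟩)
    (fun i => by simpa using hZ ⟨2 * i, _⟩) (fun i => by simpa using hZ ⟨2 * i + 1, _⟩)

lemma IsBooleanPair.moment_eq_zero (h : IsBooleanPair φ X Y) {Z : Fin p → A}
    {χ : Fin p → Bool} (hZ : ∀ i, (χ i = true → Z i ∈ X) ∧ (χ i = false → Z i ∈ Y))
    (hχ : ¬ (Even p ∧ Alternates χ)) : φ (List.ofFn Z).prod = 0 := by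
  by_cases halt : Alternates χ
  · obtain ⟨m, rfl⟩ : Odd p := Nat.not_even_iff_odd.1 fun he => hχ ⟨he, halt⟩
    cases hχ₀ : χ ⟨0, by omega⟩
    · refine h.2.2.2.moment_eq_zero fun i : Fin (2 * m + 1) => ?_
      split_ifs with he
      · exact (hZ i).2 ((halt.eq_iff_even i).2 he ▸ hχ₀)
      · have hi := mt (halt.eq_iff_even i).1 he
        rw [hχ₀, Bool.not_eq_false] at hi
        exact (hZ i).1 hi
    · refine h.2.2.1.moment_eq_zero fun i : Fin (2 * m + 1) => ?_
      split_ifs with he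
      · exact (hZ i).1 ((halt.eq_iff_even i).2 he ▸ hχ₀)
      · have hi := mt (halt.eq_iff_even i).1 he
        rw [hχ₀, Bool.not_eq_true] at hi
        exact (hZ i).2 hi
  · obtain ⟨i, j, hij, hχij⟩ : ∃ i j : Fin p, (j : ℕ) = i + 1 ∧ χ j = χ i := by
      simpa [Alternates] using halt
    rw [prod_ofFn_eq_zero_of_mul_eq_zero hij ?_, map_zero]
    cases hχi : χ i
    · exact h.2.1 _ ((hZ i).2 hχi) _ ((hZ j).2 (hχij.trans hχi))
    · exact h.1 _ ((hZ i).1 hχi) _ ((hZ j).1 (hχij.trans hχi))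

end BooleanPair

section Vanishing

variable {A : Type*} [Ring A] [Algebra ℂ A] {K : Type*} {φ : A →ₗ[ℂ] ℂ} {μ : MoebiusFamily}
  {C' D' : K → Set A} {p : ℕ}

lemma isAltBlock_univ (hp : 0 < p) {χ : Fin p → Bool} {k : Fin p → K} (hk : ∀ i j, k i = k j)
    (heven : Even p) (halt : Alternates χ) : IsAltBlock χ k univ := by
  refine ⟨univ_nonempty_iff.2 ⟨⟨0, hp⟩⟩, fun i _ j _ => hk i j, ?_,
    ⟨0, hp⟩, mem_univ _, ⟨p - 1, by omega⟩, mem_univ _, fun x _ => ⟨?_, ?_⟩, ?_⟩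
  · intro i _ j _ hij hgap
    have hsucc : (j : ℕ) = i + 1 := by
      by_contra hne
      exact hgap ⟨i + 1, by omega⟩ (mem_univ _)
        ⟨Fin.lt_def.2 (by simp), Fin.lt_def.2 (by simp; omega)⟩
    exact (halt i j hsucc).symm
  · exact Fin.le_def.2 (Nat.zero_le _)
  · exact Fin.le_def.2 (by simp; omega)
  · rw [ne_comm, Ne, halt.eq_iff_even]
    rintro ⟨s, hs : p - 1 = s + s⟩
    obtain ⟨r, hr⟩ := heven
    omega

lemma BiFreeBooleanSystem.cumulant_onePart_eq_zero (hsys : BiFreeBooleanSystem φ μ C' D')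
    (hp : 2 ≤ p) {χ : Fin p → Bool} {k : Fin p → K} (hk : ∃ i j, k i ≠ k j) {Z : Fin p → A}
    (hZ : ∀ i, (χ i = true → Z i ∈ C' (k i)) ∧ (χ i = false → Z i ∈ D' (k i))) :
    cumulant φ χ (μ p χ) (onePart p) Z = 0 := by
  obtain ⟨C, D, hfree, hC, hD, -⟩ := hsys
  exact hfree p hp χ k hk Z fun i => ⟨fun h => hC _ ((hZ i).1 h), fun h => hD _ ((hZ i).2 h)⟩

theorem moment_eq_zero_of_not_hasAltPartition (hμ : ∀ n χ, IsMoebius χ (μ n χ))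
    (hsys : BiFreeBooleanSystem φ μ C' D') {Z : Fin p → A} {χ : Fin p → Bool}
    {k : Fin p → K} (hZ : ∀ i, (χ i = true → Z i ∈ C' (k i)) ∧ (χ i = false → Z i ∈ D' (k i)))
    (hnot : ¬ HasAltPartition χ k) : φ (List.ofFn Z).prod = 0 := by
  induction p using Nat.strong_induction_on with
  | _ p ih =>
  rcases Nat.eq_zero_or_pos p with rfl | hp
  · exact absurd ⟨∅, empty_mem_BNC χ, fun B hB => absurd hB (notMem_empty B)⟩ hnot
  by_cases hk : ∀ i j, k i = k j
  · refine (hsys.isBooleanPair φ (k ⟨0, hp⟩)).moment_eq_zero (fun i => hk i ⟨0, hp⟩ ▸ hZ i)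
      fun ⟨heven, halt⟩ => hnot ⟨onePart p, onePart_mem_BNC hp χ, fun B hB => ?_⟩
    rw [mem_singleton.1 hB]
    exact isAltBlock_univ hp hk heven halt
  push Not at hk
  have hp2 : 2 ≤ p := by
    obtain ⟨i, j, hij⟩ := hk
    have := Fin.val_ne_of_ne (ne_of_apply_ne k hij)
    omega
  rw [← cumulant_onePart_eq_moment φ (hμ p χ) hp fun σ hσ hne => ?_]
  · exact hsys.cumulant_onePart_eq_zero hp2 hk hZ
  exact phiPart_eq_zero_of_not_exists_alt_refinement φ hσ
    (fun ⟨ρ, hρ, _, hB⟩ => hnot ⟨ρ, hρ, hB⟩) fun V hV hV' =>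
      ih _ ((mem_BNC_iff.1 hσ).1.card_lt_of_ne_onePart hne hV) (fun j => hZ (emb V j)) hV'

end Vanishing

section Pairing

variable {p : ℕ} {K : Type*} {χ : Fin p → Bool} {k : Fin p → K} {B : Finset (Fin p)}

lemma exists_next_mem {i x : Fin p} (hx : x ∈ B) (hix : i < x) :
    ∃ y ∈ B, i < y ∧ ∀ l ∈ B, ¬(i < l ∧ l < y) := by
  have hne : (B.filter (i < ·)).Nonempty := ⟨x, mem_filter.2 ⟨hx, hix⟩⟩
  obtain ⟨hy, hiy⟩ := mem_filter.1 ((B.filter (i < ·)).min'_mem hne)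
  exact ⟨_, hy, hiy, fun l hl ⟨hil, hly⟩ => (min'_le _ l (mem_filter.2 ⟨hl, hil⟩)).not_gt hly⟩

lemma exists_prev_mem {j x : Fin p} (hx : x ∈ B) (hxj : x < j) :
    ∃ y ∈ B, y < j ∧ ∀ l ∈ B, ¬(y < l ∧ l < j) := by
  have hne : (B.filter (· < j)).Nonempty := ⟨x, mem_filter.2 ⟨hx, hxj⟩⟩
  obtain ⟨hy, hyj⟩ := mem_filter.1 ((B.filter (· < j)).max'_mem hne)
  exact ⟨_, hy, hyj, fun l hl ⟨hyl, hlj⟩ => (le_max' _ l (mem_filter.2 ⟨hl, hlj⟩)).not_gt hyl⟩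

namespace IsAltBlock

lemma exists_next (hB : IsAltBlock χ k B) {i x : Fin p} (hi : i ∈ B) (hx : x ∈ B) (hix : i < x) :
    ∃ y ∈ B, i < y ∧ χ i ≠ χ y ∧ ∀ l ∈ B, ¬(i < l ∧ l < y) := by
  obtain ⟨y, hy, hiy, hgap⟩ := exists_next_mem hx hix
  exact ⟨y, hy, hiy, hB.2.2.1 i hi y hy hiy hgap, hgap⟩

lemma exists_prev (hB : IsAltBlock χ k B) {j x : Fin p} (hj : j ∈ B) (hx : x ∈ B) (hxj : x < j) :
    ∃ y ∈ B, y < j ∧ χ y ≠ χ j := by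
  obtain ⟨y, hy, hyj, hgap⟩ := exists_prev_mem hx hxj
  exact ⟨y, hy, hyj, hB.2.2.1 y hy j hj hyj hgap⟩

lemma exists_first_ne (hB : IsAltBlock χ k B) {j : Fin p} (hj : j ∈ B) (hmax : ∀ x ∈ B, x ≤ j) :
    ∃ i ∈ B, (∀ x ∈ B, i ≤ x) ∧ χ i ≠ χ j := by
  obtain ⟨-, -, -, i, hi, j', hj', hbound, hχ⟩ := hB
  obtain rfl := le_antisymm (hmax j' hj') (hbound j hj).2
  exact ⟨i, hi, fun x hx => (hbound x hx).1, hχ⟩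

lemma exists_last_ne (hB : IsAltBlock χ k B) {i : Fin p} (hi : i ∈ B) (hmin : ∀ x ∈ B, i ≤ x) :
    ∃ j ∈ B, (∀ x ∈ B, x ≤ j) ∧ χ i ≠ χ j := by
  obtain ⟨-, -, -, i', hi', j, hj, hbound, hχ⟩ := hB
  obtain rfl := le_antisymm (hbound i hi).1 (hmin i' hi')
  exact ⟨j, hj, fun x hx => (hbound x hx).2, hχ⟩

end IsAltBlock

end Pairing

section BooleanPartitions

variable {n : ℕ} {K : Type*} {k : Fin (2 * n) → K} {ρ : Finset (Finset (Fin (2 * n)))}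
  {m : Fin n}

lemma altChi_eq_true_iff {i : Fin (2 * n)} : altChi n i = true ↔ (i : ℕ) % 2 = 0 := by
  simp [altChi]

lemma altChi_eq_false_iff {i : Fin (2 * n)} : altChi n i = false ↔ (i : ℕ) % 2 = 1 := by
  simp [altChi]

lemma le_dIdx_of_mem (hρ : IsPartition ρ) (halt : ∀ B ∈ ρ, IsAltBlock (altChi n) k B)
    (ih : ∀ m', m < m' → SameBlock ρ (dIdx m') (dIdx' m')) {V : Finset (Fin (2 * n))}
    (hV : V ∈ ρ) (hL : dIdx m ∈ V) (hR : dIdx' m ∉ V) : ∀ x ∈ V, x ≤ dIdx m := by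
  by_contra! ⟨x, hx, hLx⟩
  obtain ⟨y, hy, hLy, hχ, hgap⟩ := (halt V hV).exists_next hL hx hLx
  have hyodd : (y : ℕ) % 2 = 1 := by
    rw [← altChi_eq_false_iff]
    rw [altChi_eq_true_iff.2 (by simp [dIdx])] at hχ
    simpa using hχ.symm
  have hLy : 2 * (m : ℕ) < y := hLy
  have hyR : (y : ℕ) ≠ 2 * m + 1 := fun h => hR (by rwa [show dIdx' m = y from Fin.ext h.symm])
  let m' : Fin n := ⟨y / 2, by omega⟩
  have hym' : dIdx' m' = y := Fin.ext (by simp [dIdx', m']; omega)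
  obtain ⟨E, hE, hE₁, hE₂⟩ := ih m' (Fin.lt_def.2 (by simp [m']; omega))
  obtain rfl := hρ.eq_of_mem hE hV (hym' ▸ hE₂) hy
  exact hgap _ hE₁
    ⟨Fin.lt_def.2 (by simp [dIdx, m']; omega), Fin.lt_def.2 (by simp [dIdx, m']; omega)⟩

lemma exists_lt_dIdx'_of_mem (hρ : IsPartition ρ) (halt : ∀ B ∈ ρ, IsAltBlock (altChi n) k B)
    (ih : ∀ m', m < m' → SameBlock ρ (dIdx m') (dIdx' m')) {W : Finset (Fin (2 * n))}
    (hW : W ∈ ρ) (hR : dIdx' m ∈ W) : ∃ y ∈ W, y < dIdx' m := by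
  by_contra! hmin
  obtain ⟨j, hj, hmax, hχ⟩ := (halt W hW).exists_last_ne hR hmin
  have hjeven : (j : ℕ) % 2 = 0 := by
    rw [← altChi_eq_true_iff]
    rw [altChi_eq_false_iff.2 (by simp [dIdx'])] at hχ
    simpa using hχ.symm
  have hRj : 2 * (m : ℕ) + 1 ≤ j := hmin j hj
  let m' : Fin n := ⟨j / 2, by omega⟩
  have hjm' : dIdx m' = j := Fin.ext (by simp [dIdx, m']; omega)
  obtain ⟨E, hE, hE₁, hE₂⟩ := ih m' (Fin.lt_def.2 (by simp [m']; omega))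
  obtain rfl := hρ.eq_of_mem hE hW (hjm' ▸ hE₁) hj
  have := Fin.le_def.1 (hmax _ hE₂)
  simp [dIdx', m'] at this
  omega

lemma sameBlock_dIdx_of_forall_gt (hρ : IsBiNonCrossing (altChi n) ρ)
    (halt : ∀ B ∈ ρ, IsAltBlock (altChi n) k B)
    (ih : ∀ m', m < m' → SameBlock ρ (dIdx m') (dIdx' m')) :
    SameBlock ρ (dIdx m) (dIdx' m) := by
  -- Otherwise `2m` is the last element of its block `V`, which starts with a right index `i`,
  -- and `2m + 1` has a left predecessor `y` in its block `W`: then `y ≺ 2m ≺ 2m + 1 ≺ i`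
  -- makes `V` and `W` cross.
  by_contra hQ
  obtain ⟨V, ⟨hV, hLV⟩, -⟩ := hρ.1.2 (dIdx m)
  obtain ⟨W, ⟨hW, hRW⟩, -⟩ := hρ.1.2 (dIdx' m)
  have hLW : dIdx m ∉ W := fun h => hQ ⟨W, hW, h, hRW⟩
  have hLmax := le_dIdx_of_mem hρ.1 halt ih hV hLV fun h => hQ ⟨V, hV, hLV, h⟩
  obtain ⟨i, hi, -, hχi⟩ := (halt V hV).exists_first_ne hLV hLmax
  obtain ⟨x, hx, hxR⟩ := exists_lt_dIdx'_of_mem hρ.1 halt ih hW hRW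
  obtain ⟨y, hy, hyR, hχy⟩ := (halt W hW).exists_prev hRW hx hxR
  have hL : altChi n (dIdx m) = true := altChi_eq_true_iff.2 (by simp [dIdx])
  have hR : altChi n (dIdx' m) = false := altChi_eq_false_iff.2 (by simp [dIdx'])
  have hχi' : altChi n i = false := by simpa [hL] using hχi.symm
  have hχy' : altChi n y = true := by simpa [hR] using hχy
  have hiL : (i : ℕ) ≤ 2 * m := hLmax i hi
  have hyR' : (y : ℕ) < 2 * m + 1 := hyR
  have hyL : (y : ℕ) ≠ 2 * m := fun h => hLW (by rwa [show dIdx m = y from Fin.ext h.symm])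
  have h₁ := (chiRank_lt_iff_of_left hχy' hL).2 (Fin.lt_def.2 (by simp [dIdx]; omega))
  have h₂ := chiRank_lt_of_left_of_right hL hR
  have h₃ := (chiRank_lt_iff_of_right hR hχi').2
    (Fin.lt_def.2 (by simp [dIdx']; have := altChi_eq_false_iff.1 hχi'; omega))
  obtain ⟨E, hE, hyE, hLE⟩ := hρ.2 _ _ _ _ h₁ h₂ h₃ ⟨W, hW, hy, hRW⟩ ⟨V, hV, hLV, hi⟩
  exact hLW (hρ.1.eq_of_mem hE hW hyE hy ▸ hLE)

lemma sameBlock_dIdx_of_isAltBlock (hρ : ρ ∈ BNC (altChi n))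
    (halt : ∀ B ∈ ρ, IsAltBlock (altChi n) k B) (m : Fin n) :
    SameBlock ρ (dIdx m) (dIdx' m) := by
  induction m using WellFoundedGT.induction with
  | _ m ih => exact sameBlock_dIdx_of_forall_gt (mem_BNC_iff.1 hρ) halt ih

lemma mem_BNCb_of_alt_refinement {π : Finset (Finset (Fin (2 * n)))} (hπ : π ∈ BNC (altChi n))
    (hρ : ρ ∈ BNC (altChi n)) (hρπ : Refines ρ π) (halt : ∀ B ∈ ρ, IsAltBlock (altChi n) k B) :
    π ∈ BNCb n :=
  mem_filter.2 ⟨hπ, fun m => (sameBlock_dIdx_of_isAltBlock hρ halt m).of_refines hρπ⟩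

lemma mem_BNCb_of_refines {σ π : Finset (Finset (Fin (2 * n)))} (hσ : σ ∈ BNCb n)
    (hπ : π ∈ BNC (altChi n)) (hσπ : Refines σ π) : π ∈ BNCb n :=
  mem_filter.2 ⟨hπ, fun m => ((mem_filter.1 hσ).2 m).of_refines hσπ⟩

end BooleanPartitions

lemma interleave_mem {A K : Type*} {C' D' : K → Set A} {n : ℕ} {ε : Fin (2 * n) → K}
    {T S : Fin n → A} (hT : ∀ m, T m ∈ C' (ε (dIdx m))) (hS : ∀ m, S m ∈ D' (ε (dIdx' m)))
    (i : Fin (2 * n)) :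
    (altChi n i = true → interleave T S i ∈ C' (ε i)) ∧
      (altChi n i = false → interleave T S i ∈ D' (ε i)) := by
  have hm : (i : ℕ) / 2 < n := by omega
  constructor
  · intro h
    have h0 := altChi_eq_true_iff.1 h
    have hi : dIdx (⟨i / 2, hm⟩ : Fin n) = i := Fin.ext (by simp [dIdx]; omega)
    simpa only [interleave, h0, if_true, hi] using hT ⟨i / 2, hm⟩
  · intro h
    have h1 := altChi_eq_false_iff.1 h
    have hi : dIdx' (⟨i / 2, hm⟩ : Fin n) = i := Fin.ext (by simp [dIdx']; omega)
    simpa only [interleave, h1, one_ne_zero, if_false, hi] using hS ⟨i / 2, hm⟩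

end BiFreeNL

open BiFreeNL in
theorem boolean_moment_cumulant_formulae_general
    {A : Type*} [Ring A] [Algebra ℂ A] {K : Type*}
    (φ : A →ₗ[ℂ] ℂ)
    (μ : MoebiusFamily) (hμ : ∀ (n : ℕ) (χ : Fin n → Bool), IsMoebius χ (μ n χ))
    (C' D' : K → Set A) (hsys : BiFreeBooleanSystem φ μ C' D')
    (n : ℕ) (hn : 1 ≤ n)
    (ε : Fin (2 * n) → K)
    (T S : Fin n → A)
    (hT : ∀ m : Fin n, T m ∈ C' (ε (dIdx m)))
    (hS : ∀ m : Fin n, S m ∈ D' (ε (dIdx' m))) :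
    (φ (List.ofFn (interleave T S)).prod
        = ∑ π ∈ BNCb n, cumulant φ (altChi n) (μ (2 * n) (altChi n)) π (interleave T S))
    ∧ (cumulant φ (altChi n) (μ (2 * n) (altChi n)) (onePart (2 * n)) (interleave T S)
        = ∑ π ∈ BNCb n,
            phiPart φ (interleave T S) π * μ (2 * n) (altChi n) π (onePart (2 * n)))
    ∧ ((∃ i j, ε i ≠ ε j) →
        cumulant φ (altChi n) (μ (2 * n) (altChi n)) (onePart (2 * n))
          (interleave T S) = 0) := by
  classical
  have hZ := interleave_mem hT hS
  have hphi : ∀ σ ∈ BNC (altChi n), σ ∉ BNCb n → phiPart φ (interleave T S) σ = 0 :=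
    fun σ hσ hσb => phiPart_eq_zero_of_not_exists_alt_refinement (k := ε) φ hσ
      (fun ⟨ρ, hρ, hρσ, halt⟩ => hσb (mem_BNCb_of_alt_refinement hσ hρ hρσ halt))
      fun V _ hV => moment_eq_zero_of_not_hasAltPartition hμ hsys (fun j => hZ (emb V j)) hV
  have hκ : ∀ π ∈ BNC (altChi n), π ∉ BNCb n →
      cumulant φ (altChi n) (μ (2 * n) (altChi n)) π (interleave T S) = 0 := by
    refine fun π hπ hπb => sum_eq_zero fun σ hσ => ?_
    obtain ⟨hσ, hσπ⟩ := mem_filter.1 hσ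
    rw [hphi σ hσ fun h => hπb (mem_BNCb_of_refines h hπ hσπ), zero_mul]
  have hsub : BNCb n ⊆ BNC (altChi n) := filter_subset _ _
  refine ⟨?_, ?_, fun hε => hsys.cumulant_onePart_eq_zero (by omega) hε hZ⟩
  · rw [← sum_cumulant_eq_moment φ (hμ _ _) (by omega)]
    exact (sum_subset hsub hκ).symm
  · rw [cumulant, filter_refines_onePart]
    exact (sum_subset hsub fun σ hσ hσb => by rw [hphi σ hσ hσb, zero_mul]).symm

open BiFreeNL in
/-- **Boolean moment and cumulant formulae, scalar case.** -/
theorem boolean_moment_cumulant_formulae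
    {A : Type*} [Ring A] [Algebra ℂ A] {K : Type*}
    (φ : A →ₗ[ℂ] ℂ) (hφ : φ 1 = 1)
    (μ : MoebiusFamily) (hμ : ∀ (n : ℕ) (χ : Fin n → Bool), IsMoebius χ (μ n χ))
    (C' D' : K → Set A) (hsys : BiFreeBooleanSystem φ μ C' D')
    (n : ℕ) (hn : 1 ≤ n)
    (ε : Fin (2 * n) → K) (hε : ∀ m : Fin n, ε (dIdx m) = ε (dIdx' m))
    (T S : Fin n → A)
    (hT : ∀ m : Fin n, T m ∈ C' (ε (dIdx m)))
    (hS : ∀ m : Fin n, S m ∈ D' (ε (dIdx' m))) :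
    (φ (List.ofFn (interleave T S)).prod
        = ∑ π ∈ BNCb n, cumulant φ (altChi n) (μ (2 * n) (altChi n)) π (interleave T S))
    ∧ (cumulant φ (altChi n) (μ (2 * n) (altChi n)) (onePart (2 * n)) (interleave T S)
        = ∑ π ∈ BNCb n,
            phiPart φ (interleave T S) π * μ (2 * n) (altChi n) π (onePart (2 * n)))
    ∧ ((∃ i j, ε i ≠ ε j) →
        cumulant φ (altChi n) (μ (2 * n) (altChi n)) (onePart (2 * n))
          (interleave T S) = 0) :=
  boolean_moment_cumulant_formulae_general φ μ hμ C' D' hsys n hn ε T S hT hS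
end

section
/- (Vertically split cumulant sum factors the moments.) Let (A, φ) be a non-commutative probability space, let Z_1,…,Z_n ∈ A, and let χ : {1,…,n} → {ℓ,r} with χ⁻¹({ℓ}) = {i_1 < i_2 < ⋯ < i_k} and χ⁻¹({r}) = {j_1 < j_2 < ⋯ < j_m}. Then Σ_{π ∈ BNC_vs(χ)} κ_π(Z_1,…,Z_n) = φ(Z_{i_1} Z_{i_2} ⋯ Z_{i_k})·φ(Z_{j_1} Z_{j_2} ⋯ Z_{j_m}), with the convention that φ of an empty product equals 1. -/
/-!
Sum the cumulants over all `π ≤ Q` in `BNC(χ)` and exchange the two sums: the inner sum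
`∑_{σ ≤ π ≤ Q} μ(σ, π)` is `δ_{σ Q}`, so Möbius inversion returns the moment `φ_Q`.
A partition is vertically split exactly when it refines `{χ⁻¹(ℓ), χ⁻¹(r)}`, which is
bi-non-crossing because in the order `≺_χ` all left indices precede all right ones. Hence the
sum over `BNC_vs(χ)` is `φ_{{χ⁻¹(ℓ), χ⁻¹(r)}}`, the product of the two one-sided moments.
-/

open Finset

namespace BiFreeNL

open scoped Classical

variable {A : Type*} [Ring A] [Algebra ℂ A]

/-- The vertically split bi-non-crossing partitions: every block lies entirely on the
left or entirely on the right. -/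
noncomputable def BNCvs {n : ℕ} (χ : Fin n → Bool) : Finset (Finset (Finset (Fin n))) :=
  (BNC χ).filter fun P => ∀ V ∈ P, (∀ i ∈ V, χ i = true) ∨ (∀ i ∈ V, χ i = false)

end BiFreeNL

open Finset

namespace BiFreeNL

open scoped Classical

variable {n : ℕ}

theorem Refines.refl (P : Finset (Finset (Fin n))) : Refines P P :=
  fun V hV => ⟨V, hV, subset_rfl⟩

theorem Refines.trans {P Q R : Finset (Finset (Fin n))} (hPQ : Refines P Q)
    (hQR : Refines Q R) : Refines P R := by
  intro V hV
  obtain ⟨W, hW, hVW⟩ := hPQ V hV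
  obtain ⟨X, hX, hWX⟩ := hQR W hW
  exact ⟨X, hX, hVW.trans hWX⟩

section Moments

variable {A : Type*} [Ring A] [Algebra ℂ A] (φ : A →ₗ[ℂ] ℂ) (Z : Fin n → A)

noncomputable def blockMoment (V : Finset (Fin n)) : ℂ :=
  φ ((V.sort (· ≤ ·)).map Z).prod

theorem blockMoment_empty (hφ : φ 1 = 1) : blockMoment φ Z ∅ = 1 := by
  simpa [blockMoment] using hφ

theorem phiPart_eq_prod_blockMoment (P : Finset (Finset (Fin n))) :
    phiPart φ Z P = ∏ V ∈ P, blockMoment φ Z V :=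
  rfl

theorem sum_cumulant_of_refines {χ : Fin n → Bool}
    {μ : Finset (Finset (Fin n)) → Finset (Finset (Fin n)) → ℂ} (hμ : IsMoebius χ μ)
    {Q : Finset (Finset (Fin n))} (hQ : Q ∈ BNC χ) :
    ∑ P ∈ (BNC χ).filter (Refines · Q), cumulant φ χ μ P Z = phiPart φ Z Q := by
  have hswap :
      ∑ P ∈ (BNC χ).filter (Refines · Q), cumulant φ χ μ P Z
        = ∑ σ ∈ (BNC χ).filter (Refines · Q), phiPart φ Z σ *
            ∑ P ∈ (BNC χ).filter (fun P => Refines σ P ∧ Refines P Q), μ σ P := by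
    simp only [cumulant, mul_sum]
    refine sum_comm' fun P σ => ?_
    simp only [mem_filter]
    exact ⟨fun ⟨⟨hP, hPQ⟩, hσ, hσP⟩ => ⟨⟨hP, hσP, hPQ⟩, hσ, hσP.trans hPQ⟩,
      fun ⟨⟨hP, hσP, hPQ⟩, hσ, _⟩ => ⟨⟨hP, hPQ⟩, hσ, hσP⟩⟩
  have hQmem : Q ∈ (BNC χ).filter (Refines · Q) := mem_filter.mpr ⟨hQ, Refines.refl Q⟩
  rw [hswap, sum_congr rfl fun σ hσ => by
    rw [hμ.2.2 σ Q (mem_filter.mp hσ).1 hQ (mem_filter.mp hσ).2, mul_ite, mul_one, mul_zero],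
    sum_ite_eq', if_pos hQmem]

end Moments

section LeftRightSplit

variable (χ : Fin n → Bool)

noncomputable def leftSet : Finset (Fin n) :=
  univ.filter fun i => χ i = true

noncomputable def rightSet : Finset (Fin n) :=
  univ.filter fun i => χ i = false

noncomputable def lrPartition : Finset (Finset (Fin n)) :=
  ({leftSet χ, rightSet χ} : Finset (Finset (Fin n))).filter Finset.Nonempty

variable {χ}

@[simp]
theorem mem_leftSet {i : Fin n} : i ∈ leftSet χ ↔ χ i = true := by
  simp [leftSet]

@[simp]
theorem mem_rightSet {i : Fin n} : i ∈ rightSet χ ↔ χ i = false := by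
  simp [rightSet]

theorem mem_lrPartition {V : Finset (Fin n)} :
    V ∈ lrPartition χ ↔ (V = leftSet χ ∨ V = rightSet χ) ∧ V.Nonempty := by
  simp [lrPartition]

theorem disjoint_leftSet_rightSet : Disjoint (leftSet χ) (rightSet χ) :=
  disjoint_left.mpr fun i hL hR => by simp_all

theorem chiRank_lt_card_leftSet_iff {i : Fin n} :
    chiRank χ i < #(leftSet χ) ↔ χ i = true := by
  unfold chiRank leftSet
  cases h : χ i with
  | false => simp
  | true =>
    simp only [if_true, iff_true]
    refine card_lt_card ⟨fun j hj => by simp_all, fun hsub => ?_⟩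
    simpa using hsub (by simp [h] : i ∈ univ.filter fun j => χ j = true)

theorem eq_filter_of_mem_lrPartition {V : Finset (Fin n)} (hV : V ∈ lrPartition χ) {i : Fin n}
    (hi : i ∈ V) : V = univ.filter fun j => χ j = χ i := by
  rcases (mem_lrPartition.mp hV).1 with rfl | rfl <;> ext j <;> simp_all

theorem filter_mem_lrPartition (i : Fin n) :
    (univ.filter fun j => χ j = χ i) ∈ lrPartition χ := by
  refine mem_lrPartition.mpr ⟨?_, i, by simp⟩
  cases χ i <;> simp [leftSet, rightSet]

theorem sameBlock_lrPartition_iff {i j : Fin n} :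
    SameBlock (lrPartition χ) i j ↔ χ i = χ j := by
  constructor
  · rintro ⟨V, hV, hi, hj⟩
    rw [eq_filter_of_mem_lrPartition hV hi] at hj
    exact (mem_filter.mp hj).2.symm
  · exact fun hij => ⟨_, filter_mem_lrPartition i, by simp, by simp [hij]⟩

theorem isPartition_lrPartition : IsPartition (lrPartition χ) :=
  ⟨fun _ hV => (mem_lrPartition.mp hV).2, fun i =>
    ⟨_, ⟨filter_mem_lrPartition i, by simp⟩, fun _ ⟨hW, hi⟩ => eq_filter_of_mem_lrPartition hW hi⟩⟩

theorem lrPartition_mem_BNC : lrPartition χ ∈ BNC χ := by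
  simp only [BNC, mem_filter, mem_univ, true_and]
  refine ⟨isPartition_lrPartition, fun u₁ v₁ u₂ v₂ h₁ h₂ _ hu _ => ?_⟩
  rw [sameBlock_lrPartition_iff] at hu ⊢
  rw [Bool.eq_iff_iff, ← chiRank_lt_card_leftSet_iff, ← chiRank_lt_card_leftSet_iff] at hu ⊢
  omega

theorem exists_mem_lrPartition_superset_iff {V : Finset (Fin n)} (hV : V.Nonempty) :
    (∃ W ∈ lrPartition χ, V ⊆ W) ↔ (∀ i ∈ V, χ i = true) ∨ (∀ i ∈ V, χ i = false) := by
  have hL : V ⊆ leftSet χ ↔ ∀ i ∈ V, χ i = true := by simp [subset_iff]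
  have hR : V ⊆ rightSet χ ↔ ∀ i ∈ V, χ i = false := by simp [subset_iff]
  rw [← hL, ← hR]
  constructor
  · rintro ⟨W, hW, hVW⟩
    rcases (mem_lrPartition.mp hW).1 with rfl | rfl
    exacts [Or.inl hVW, Or.inr hVW]
  · rintro (hVW | hVW)
    · exact ⟨leftSet χ, mem_lrPartition.mpr ⟨Or.inl rfl, hV.mono hVW⟩, hVW⟩
    · exact ⟨rightSet χ, mem_lrPartition.mpr ⟨Or.inr rfl, hV.mono hVW⟩, hVW⟩

theorem BNCvs_eq_filter_refines_lrPartition :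
    BNCvs χ = (BNC χ).filter (Refines · (lrPartition χ)) := by
  refine filter_congr fun P hP => forall₂_congr fun V hV => ?_
  have hpart : IsPartition P := (mem_filter.mp hP).2.1
  exact (exists_mem_lrPartition_superset_iff (hpart.1 V hV)).symm

theorem phiPart_lrPartition {A : Type*} [Ring A] [Algebra ℂ A] (φ : A →ₗ[ℂ] ℂ) (hφ : φ 1 = 1)
    (Z : Fin n → A) :
    phiPart φ Z (lrPartition χ) = blockMoment φ Z (leftSet χ) * blockMoment φ Z (rightSet χ) := by
  -- an empty side contributes `φ 1 = 1`, so discarding it does not change the product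
  rw [phiPart_eq_prod_blockMoment, lrPartition, prod_filter_of_ne fun V _ hV => ?_]
  · by_cases hLR : leftSet χ = rightSet χ
    · have hempty : rightSet χ = ∅ := by
        simpa [hLR] using (disjoint_leftSet_rightSet (χ := χ))
      simp [hLR, hempty, blockMoment_empty φ Z hφ]
    · exact prod_pair hLR
  · by_contra hempty
    rw [not_nonempty_iff_eq_empty.mp hempty, blockMoment_empty φ Z hφ] at hV
    exact hV rfl

end LeftRightSplit

end BiFreeNL

open BiFreeNL Finset
open scoped Classical in
/-- **Vertically split cumulant sum factors the moments.** -/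
theorem vs_cumulant_sum_factors
    {A : Type*} [Ring A] [Algebra ℂ A]
    (φ : A →ₗ[ℂ] ℂ) (hφ : φ 1 = 1)
    (μ : MoebiusFamily) (hμ : ∀ (m : ℕ) (χ : Fin m → Bool), IsMoebius χ (μ m χ))
    (n : ℕ) (Z : Fin n → A) (χ : Fin n → Bool) :
    (∑ π ∈ BNCvs χ, cumulant φ χ (μ n χ) π Z)
      = φ ((((univ : Finset (Fin n)).filter fun i => χ i = true).sort (· ≤ ·)).map Z).prod
        * φ ((((univ : Finset (Fin n)).filter fun i => χ i = false).sort (· ≤ ·)).map Z).prod := by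
  rw [BNCvs_eq_filter_refines_lrPartition,
    sum_cumulant_of_refines φ Z (hμ n χ) lrPartition_mem_BNC]
  exact phiPart_lrPartition φ hφ Z
end
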